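/- Let (X,d) be a compact metric space and f : X → X a homeomorphism. If (X,f) is not minimal and has the gluing orbit property, then f has a non-recurrent point, i.e., there exist z ∈ X and ε₀ > 0 such that d(f^n(z), z) ≥ ε₀ for every nonzero integer n. -/

import Mathlib

open Filter Set Metric

namespace Paper

variable {X : Type*}

/-- Integer iteration of a homeomorphism: `f^n` for `n : ℤ`. -/
def zIter [TopologicalSpace X] (f : X ≃ₜ X) (n : ℤ) (x : X) : X :=
  if 0 ≤ n then (⇑f)^[n.toNat] x else (⇑f.symm)^[(-n).toNat] x

/-- `(X,f)` is minimal: every (two-sided) orbit is dense. -/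
def Minimal [TopologicalSpace X] (f : X ≃ₜ X) : Prop :=
  ∀ x : X, Dense (Set.range fun n : ℤ => zIter f n x)

/-- Topological transitivity. -/
def TopTransitive [TopologicalSpace X] (f : X ≃ₜ X) : Prop :=
  ∀ U V : Set X, IsOpen U → IsOpen V → U.Nonempty → V.Nonempty →
    ∃ n : ℤ, (U ∩ (zIter f n) ⁻¹' V).Nonempty

/-- Equicontinuity of the family of forward iterates. -/
def EquicontinuousSystem [MetricSpace X] (f : X → X) : Prop :=
  ∀ ε : ℝ, 0 < ε → ∃ δ : ℝ, 0 < δ ∧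
    ∀ x y : X, dist x y < δ → ∀ n : ℕ, dist (f^[n] x) (f^[n] y) < ε

/-- The transition times `s_j` (0-indexed: `s 0 = 0`,
`s (j+1) = s j + m_j + t_j - 1`) for an orbit sequence `C` (with lengths `m_j = (C j).2`)
and a gap `g`. -/
def sTimes (C : ℕ → X × ℕ) (g : ℕ → ℕ) : ℕ → ℕ
  | 0 => 0
  | j + 1 => sTimes C g j + (C j).2 + g j - 1

/-- `(C, g)` (an orbit sequence of rank `k` together with a gap) is `ε`-shadowed by `z`. -/
def Shadows [MetricSpace X] (f : X → X) (k : ℕ) (C : ℕ → X × ℕ) (g : ℕ → ℕ)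
    (ε : ℝ) (z : X) : Prop :=
  ∀ j < k, ∀ l < (C j).2, dist (f^[sTimes C g j + l] z) (f^[l] (C j).1) < ε

/-- The gluing orbit property. -/
def GluingOrbit [MetricSpace X] (f : X → X) : Prop :=
  ∀ ε : ℝ, 0 < ε → ∃ M : ℕ, 0 < M ∧
    ∀ k : ℕ, 0 < k → ∀ C : ℕ → X × ℕ, (∀ j < k, 0 < (C j).2) →
      ∃ g : ℕ → ℕ, (∀ j < k - 1, 0 < g j ∧ g j ≤ M) ∧
        ∃ z : X, Shadows f k C g ε z

/-- The specification property, at scale `ε` with constant `M`. -/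
def SpecWith [MetricSpace X] (f : X → X) (ε : ℝ) (M : ℕ) : Prop :=
  ∀ k : ℕ, 0 < k → ∀ C : ℕ → X × ℕ, (∀ j < k, 0 < (C j).2) →
    ∀ g : ℕ → ℕ, (∀ j < k - 1, M ≤ g j) →
      ∃ z : X, Shadows f k C g ε z

/-- The specification property. -/
def Specification [MetricSpace X] (f : X → X) : Prop :=
  ∀ ε : ℝ, 0 < ε → ∃ M : ℕ, 0 < M ∧ SpecWith f ε M

/-- The periodic gluing orbit property. -/
def PerGluingOrbit [MetricSpace X] (f : X → X) : Prop :=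
  ∀ ε : ℝ, 0 < ε → ∃ M : ℕ, 0 < M ∧
    ∀ k : ℕ, 0 < k → ∀ C : ℕ → X × ℕ, (∀ j < k, 0 < (C j).2) →
      ∃ t : ℕ, 0 < t ∧ t ≤ M ∧
        ∃ g : ℕ → ℕ, (∀ j < k - 1, 0 < g j ∧ g j ≤ M) ∧
          ∃ z : X, Shadows f k C g ε z ∧
            f^[sTimes C g (k - 1) + (C (k - 1)).2 + t] z = z

/-- `E` is an `(n,ε)`-separated set. -/
def IsSepSet [MetricSpace X] (f : X → X) (n : ℕ) (ε : ℝ) (E : Set X) : Prop :=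
  ∀ x ∈ E, ∀ y ∈ E, x ≠ y → ∃ k < n, ε < dist (f^[k] x) (f^[k] y)

/-- `s(n,ε)`: the maximal cardinality of an `(n,ε)`-separated subset of `X`. -/
noncomputable def sepNum [MetricSpace X] (f : X → X) (n : ℕ) (ε : ℝ) : ℕ :=
  sSup {N : ℕ | ∃ E : Finset X, IsSepSet f n ε ↑E ∧ E.card = N}

/-- Topological entropy `h(f) = lim_{ε → 0⁺} limsup_n (ln s(n,ε))/n`; since the inner
quantity is monotone as `ε` decreases, the limit equals the supremum over `ε > 0`. -/
noncomputable def topEnt [MetricSpace X] (f : X → X) : EReal :=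
  ⨆ (ε : ℝ) (_ : 0 < ε),
    Filter.limsup (fun n : ℕ => ((Real.log (sepNum f n ε) / n : ℝ) : EReal)) Filter.atTop

/-- The set of periodic points of period at most `n`. -/
def perPts (f : X → X) (n : ℕ) : Set X :=
  {x | ∃ m : ℕ, 0 < m ∧ m ≤ n ∧ f^[m] x = x}

open Classical in
/-- `p(f) = limsup_n (ln p_n(f))/n`, the exponential growth rate of periodic points
(`⊤` contributions when there are infinitely many such points). -/
noncomputable def perGrowth (f : X → X) : EReal :=
  Filter.limsup (fun n : ℕ =>
      if h : (perPts f n).Finite then ((Real.log (perPts f n).ncard / n : ℝ) : EReal) else ⊤)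
    Filter.atTop

/-- The lower box dimension of `X`, `liminf_{ε→0⁺} ln s(1,ε) / (-ln ε)`. -/
noncomputable def lowerBoxDim [MetricSpace X] (f : X → X) : EReal :=
  Filter.liminf (fun ε : ℝ => ((Real.log (sepNum f 1 ε) / (-Real.log ε) : ℝ) : EReal))
    (nhdsWithin 0 (Set.Ioi 0))



































/-! Semiflow case -/

/-- `φ` is a continuous semiflow on `X` (for nonnegative times). -/
def IsSemiflow [TopologicalSpace X] (φ : ℝ → X → X) : Prop :=
  (∀ x : X, φ 0 x = x) ∧
    (∀ s t : ℝ, 0 ≤ s → 0 ≤ t → ∀ x : X, φ (s + t) x = φ s (φ t x)) ∧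
      Continuous fun p : ℝ × X => φ p.1 p.2

/-- Minimality of a semiflow: every forward orbit is dense. -/
def MinimalFlow [TopologicalSpace X] (φ : ℝ → X → X) : Prop :=
  ∀ x : X, Dense {y : X | ∃ t : ℝ, 0 ≤ t ∧ φ t x = y}

/-- Transition times for the semiflow gluing: `s 0 = 0`, `s (j+1) = s j + m_j + t_j`. -/
def sFlow (C : ℕ → X × ℝ) (g : ℕ → ℝ) : ℕ → ℝ
  | 0 => 0
  | j + 1 => sFlow C g j + (C j).2 + g j

/-- Gluing orbit property for a semiflow. -/
def GluingFlow [MetricSpace X] (φ : ℝ → X → X) : Prop :=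
  ∀ ε : ℝ, 0 < ε → ∃ M : ℝ, 0 < M ∧
    ∀ k : ℕ, 0 < k → ∀ C : ℕ → X × ℝ, (∀ j < k, 0 ≤ (C j).2) →
      ∃ g : ℕ → ℝ, (∀ j < k - 1, 0 ≤ g j ∧ g j ≤ M) ∧
        ∃ z : X, ∀ j < k, ∀ t ∈ Set.Icc (0 : ℝ) (C j).2,
          dist (φ (sFlow C g j + t) z) (φ t (C j).1) < ε

/-- `E` is a `(T,ε)`-separated set for the semiflow `φ`. -/
def IsSepFlow [MetricSpace X] (φ : ℝ → X → X) (T ε : ℝ) (E : Set X) : Prop :=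
  ∀ x ∈ E, ∀ y ∈ E, x ≠ y → ∃ t ∈ Set.Icc (0 : ℝ) T, ε < dist (φ t x) (φ t y)

/-- `s(T,ε)` for the semiflow. -/
noncomputable def sepFlow [MetricSpace X] (φ : ℝ → X → X) (T ε : ℝ) : ℕ :=
  sSup {N : ℕ | ∃ E : Finset X, IsSepFlow φ T ε ↑E ∧ E.card = N}

/-- Topological entropy of a semiflow. -/
noncomputable def topEntFlow [MetricSpace X] (φ : ℝ → X → X) : EReal :=
  ⨆ (ε : ℝ) (_ : 0 < ε),
    Filter.limsup (fun T : ℝ => ((Real.log (sepFlow φ T ε) / T : ℝ) : EReal)) Filter.atTop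

/-! Take a point `x` with non-dense orbit and a point `y` at distance `r > 0` from that orbit.
Gluing a long backward piece of the orbit of `x`, the point `y`, and a long forward piece of the
orbit of `x` gives points `r/3`-close to `y` whose iterates at all times `M ≤ |b| ≤ n` stay
`r/3`-close to the orbit of `x`, where `M` is the gluing constant. By compactness one such point
`a` works for all `|b| ≥ M`, so these iterates stay `r/3` away from `a`. In particular `a` is not
periodic, and the finitely many remaining returns `0 < |b| < M` are bounded away from `a` as
well. -/

open Topology

section zIter

variable [TopologicalSpace X] (f : X ≃ₜ X)

theorem zIter_eq_perm_zpow (n : ℤ) (x : X) : zIter f n x = (f.toEquiv ^ n) x := by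
  obtain ⟨m, rfl | rfl⟩ := Int.eq_nat_or_neg n
  · simp [zIter, Equiv.Perm.coe_pow]
  · rcases Nat.eq_zero_or_pos m with rfl | hm
    · rfl
    · simp [zIter, hm.ne', zpow_neg, ← inv_pow, Equiv.Perm.coe_pow]

theorem zIter_add (a b : ℤ) (x : X) : zIter f (a + b) x = zIter f a (zIter f b x) := by
  simp only [zIter_eq_perm_zpow, zpow_add, Equiv.Perm.mul_apply]

theorem zIter_natCast (n : ℕ) (x : X) : zIter f n x = (⇑f)^[n] x := by
  simp [zIter]

theorem zIter_neg_natCast (n : ℕ) (x : X) : zIter f (-n) x = (⇑f.symm)^[n] x := by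
  rcases Nat.eq_zero_or_pos n with rfl | hn
  · rfl
  · simp [zIter, hn.ne']

theorem continuous_zIter (n : ℤ) : Continuous (zIter f n) := by
  unfold zIter
  split_ifs
  · exact f.continuous.iterate _
  · exact f.symm.continuous.iterate _

theorem zIter_mul_eq_self {n : ℤ} {x : X} (h : zIter f n x = x) (k : ℤ) :
    zIter f (n * k) x = x := by
  rw [zIter_eq_perm_zpow] at h ⊢
  rw [zpow_mul]
  exact Equiv.Perm.zpow_apply_eq_self_of_apply_eq_self h k

end zIter

theorem symm_iterate_iterate_of_le [TopologicalSpace X] (f : X ≃ₜ X) {b s : ℕ} (h : b ≤ s)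
    (x : X) :
    (⇑f.symm)^[b] ((⇑f)^[s] x) = (⇑f)^[s - b] x := by
  rw [← Nat.add_sub_of_le h, Function.iterate_add_apply, Nat.add_sub_cancel_left]
  exact Function.LeftInverse.iterate f.symm_apply_apply b _

def IsNonRecurrent [MetricSpace X] (f : X ≃ₜ X) (z : X) : Prop :=
  ∃ ε₀ : ℝ, 0 < ε₀ ∧ ∀ n : ℤ, n ≠ 0 → ε₀ ≤ dist (zIter f n z) z

section MetricSpace

variable [MetricSpace X] {f : X ≃ₜ X}

theorem isNonRecurrent_of_forall_le_dist {a : X} {δ : ℝ} {M : ℕ} (hδ : 0 < δ)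
    (hfar : ∀ b : ℤ, M ≤ b.natAbs → δ ≤ dist (zIter f b a) a) : IsNonRecurrent f a := by
  have hnotper : ∀ b : ℤ, b ≠ 0 → 0 < dist (zIter f b a) a := by
    refine fun b hb => dist_pos.2 fun hper => ?_
    have := hfar (b * M) (by simpa [Int.natAbs_mul] using Nat.le_mul_of_pos_left M (by omega))
    rw [zIter_mul_eq_self f hper, dist_self] at this
    linarith
  have hsmall : ∀ᶠ ε in 𝓝[>] (0 : ℝ), ∀ b ∈ Ioo (-(M : ℤ)) M, b ≠ 0 → ε ≤ dist (zIter f b a) a :=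
    (finite_Ioo _ _).eventually_all.2 fun b _ => eventually_imp_distrib_left.2 fun hb =>
      (eventually_le_nhds (hnotper b hb)).filter_mono nhdsWithin_le_nhds
  obtain ⟨ε₀, hsmall, hεδ, hε₀⟩ :=
    (hsmall.and (((eventually_le_nhds hδ).filter_mono nhdsWithin_le_nhds).and
      self_mem_nhdsWithin)).exists
  refine ⟨ε₀, hε₀, fun n hn => ?_⟩
  by_cases hnM : M ≤ n.natAbs
  · exact hεδ.trans (hfar n hnM)
  · exact hsmall n (mem_Ioo.2 (by omega)) hn

theorem GluingOrbit.exists_near_shadowing_orbit (hgo : GluingOrbit (⇑f)) (x y : X) {ε : ℝ}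
    (hε : 0 < ε) : ∃ M : ℕ, ∀ n : ℕ, ∃ w : X, dist w y < ε ∧
      ∀ b : ℤ, M ≤ b.natAbs → b.natAbs ≤ n → ∃ m : ℤ, dist (zIter f b w) (zIter f m x) < ε := by
  obtain ⟨M, -, hM⟩ := hgo ε hε
  refine ⟨M, fun n => ?_⟩
  let C : ℕ → X × ℕ := fun j =>
    if j = 0 then ((⇑f.symm)^[n + 1] x, n + 1) else if j = 1 then (y, 1) else (x, n + 1)
  obtain ⟨g, hg, z, hz⟩ := hM 3 (by norm_num) C (by intro j _; dsimp only [C]; split_ifs <;> omega)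
  obtain ⟨hg0, hg0M⟩ := hg 0 (by norm_num)
  obtain ⟨hg1, hg1M⟩ := hg 1 (by norm_num)
  have hs1 : sTimes C g 1 = n + g 0 := by simp [sTimes, C]
  have hs2 : sTimes C g 2 = n + g 0 + g 1 := by simp [sTimes, C]
  refine ⟨(⇑f)^[n + g 0] z, ?_, fun b hMb hbn => ?_⟩
  · have h := hz 1 (by norm_num) 0 (by simp [C])
    rw [hs1] at h
    simpa [C] using h
  obtain ⟨c, rfl | rfl⟩ := Int.eq_nat_or_neg b
  · refine ⟨(c - g 1 : ℕ), ?_⟩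
    have h := hz 2 (by norm_num) (c - g 1) (by simp [C]; omega)
    rw [hs2, show n + g 0 + g 1 + (c - g 1) = c + (n + g 0) by omega] at h
    simpa [zIter_natCast, Function.iterate_add_apply, C] using h
  · refine ⟨(n + g 0 - c : ℕ) + -(n + 1 : ℕ), ?_⟩
    have h := hz 0 (by norm_num) (n + g 0 - c) (by simp [C]; omega)
    rw [zIter_neg_natCast, symm_iterate_iterate_of_le f (by omega), zIter_add, zIter_natCast,
      zIter_neg_natCast]
    simpa [sTimes, C] using h

theorem GluingOrbit.exists_forall_infDist_zIter_le [CompactSpace X] (hgo : GluingOrbit (⇑f))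
    (x y : X) {ε : ℝ} (hε : 0 < ε) : ∃ M : ℕ, ∃ a : X, dist a y ≤ ε ∧
      ∀ b : ℤ, M ≤ b.natAbs → infDist (zIter f b a) (range fun m : ℤ => zIter f m x) ≤ ε := by
  obtain ⟨M, hM⟩ := hgo.exists_near_shadowing_orbit x y hε
  let O := range fun m : ℤ => zIter f m x
  let t : ℕ → Set X := fun n =>
    closedBall y ε ∩ {w | ∀ b : ℤ, M ≤ b.natAbs → b.natAbs ≤ n → infDist (zIter f b w) O ≤ ε}
  have ht_closed (n : ℕ) : IsClosed (t n) := by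
    refine isClosed_closedBall.inter ?_
    simp only [ofPred_forall]
    exact isClosed_iInter fun b => isClosed_iInter fun _ => isClosed_iInter fun _ =>
      isClosed_le ((continuous_infDist_pt O).comp (continuous_zIter f b)) continuous_const
  have ht_nonempty (n : ℕ) : (t n).Nonempty := by
    obtain ⟨w, hwy, hw⟩ := hM n
    refine ⟨w, mem_closedBall.2 hwy.le, fun b hMb hbn => ?_⟩
    obtain ⟨m, hm⟩ := hw b hMb hbn
    exact (infDist_le_dist_of_mem (mem_range_self m)).trans hm.le
  have ht_anti (n : ℕ) : t (n + 1) ⊆ t n :=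
    inter_subset_inter_right _ fun w hw b hMb hbn => hw b hMb (by omega)
  obtain ⟨a, ha⟩ := IsCompact.nonempty_iInter_of_sequence_nonempty_isCompact_isClosed t ht_anti
    ht_nonempty (ht_closed 0).isCompact ht_closed
  rw [mem_iInter] at ha
  exact ⟨M, a, (ha 0).1, fun b hMb => (ha b.natAbs).2 b hMb le_rfl⟩

end MetricSpace

theorem stmt8 [MetricSpace X] [CompactSpace X] (f : X ≃ₜ X)
    (hnm : ¬ Minimal f) (hgo : GluingOrbit (⇑f)) :
    ∃ z : X, ∃ ε₀ : ℝ, 0 < ε₀ ∧ ∀ n : ℤ, n ≠ 0 → ε₀ ≤ dist (zIter f n z) z := by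
  simp only [Minimal, Dense, not_forall] at hnm
  obtain ⟨x, y, hy⟩ := hnm
  set O := range fun m : ℤ => zIter f m x
  have hε : 0 < infDist y O / 3 := by
    rw [← infDist_closure]
    have := (isClosed_closure.notMem_iff_infDist_pos ⟨_, subset_closure (mem_range_self 0)⟩).1 hy
    positivity
  obtain ⟨M, a, hay, ha⟩ := hgo.exists_forall_infDist_zIter_le x y hε
  refine ⟨a, isNonRecurrent_of_forall_le_dist (M := M) hε fun b hb => ?_⟩
  have hya := infDist_le_infDist_add_dist (x := y) (y := a) (s := O)
  have hab := infDist_le_infDist_add_dist (x := a) (y := zIter f b a) (s := O)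
  rw [dist_comm] at hay hab
  linarith [ha b hb]

end Paper
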